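/- arXiv:2105.01090 — 2 statements merged into one kernel-verified Lean document; each statement's English description precedes it below -/
import Mathlib

section
/- Let α > 0, let J = I₄/4 + α σ_z ⊗ σ_z (a 4×4 Hermitian matrix), and suppose r = 1/4 − α. Then there exist no finite probability distribution {p_i} and matrices X_i ∈ SL(2,ℂ) such that Σ_i p_i (X_i ⊗ X_i)† J (X_i ⊗ X_i) = r·I₄. -/
open Matrix Kronecker

def sigmaZ : Matrix (Fin 2) (Fin 2) ℂ := !![1, 0; 0, -1]

/-! Compare traces. On the right, `tr (r • 1) = 4r = 1 - 4α < 1`. On the left, for each term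
`tr ((X ⊗ X)ᴴ J (X ⊗ X)) = (tr XᴴX)² / 4 + α (tr Xᴴ σ_z X)²`, where both traces are real,
and `tr XᴴX = ∑ |X_ij|² ≥ 2 |det X| = 2`; so every term has trace at least `1`, and so does
any convex combination of them. -/

namespace Matrix

variable {l m n p : Type*} [Fintype m] [Fintype n] [Fintype l] [Fintype p]

theorem trace_conjTranspose_kronecker_mul_kronecker_mul_kronecker {R : Type*} [CommRing R]
    [StarRing R] (X : Matrix m l R) (Y : Matrix n p R) (A : Matrix m m R) (B : Matrix n n R) :
    trace ((X ⊗ₖ Y)ᴴ * (A ⊗ₖ B) * (X ⊗ₖ Y)) = trace (Xᴴ * A * X) * trace (Yᴴ * B * Y) := by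
  rw [conjTranspose_kronecker, ← mul_kronecker_mul, ← mul_kronecker_mul, trace_kronecker]

theorem IsHermitian.im_trace {A : Matrix n n ℂ} (hA : A.IsHermitian) : A.trace.im = 0 :=
  Complex.conj_eq_iff_im.mp (by simpa [hA.eq] using (trace_conjTranspose A).symm)

theorem re_trace_conjTranspose_mul_self (X : Matrix m n ℂ) :
    (Xᴴ * X).trace.re = ∑ i, ∑ j, ‖X i j‖ ^ 2 := by
  rw [Finset.sum_comm]
  simp [trace, mul_apply, Complex.re_sum, ← Complex.normSq_eq_norm_sq, Complex.normSq_apply,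
    Complex.mul_re]

theorem two_mul_norm_det_le_sum_norm_sq (X : Matrix (Fin 2) (Fin 2) ℂ) :
    2 * ‖X.det‖ ≤ ∑ i, ∑ j, ‖X i j‖ ^ 2 := by
  have hdet : ‖X.det‖ ≤ ‖X 0 0‖ * ‖X 1 1‖ + ‖X 0 1‖ * ‖X 1 0‖ := by
    rw [det_fin_two, ← norm_mul, ← norm_mul]
    exact norm_sub_le _ _
  simp only [Fin.sum_univ_two]
  nlinarith [two_mul_le_add_sq ‖X 0 0‖ ‖X 1 1‖, two_mul_le_add_sq ‖X 0 1‖ ‖X 1 0‖]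

theorem mul_sq_re_trace_le_re_trace_kronecker_conj {c α : ℝ} (hα : 0 ≤ α) {A : Matrix m m ℂ}
    (hA : A.IsHermitian) [DecidableEq m] (X : Matrix m n ℂ) :
    c * (Xᴴ * X).trace.re ^ 2 ≤
      (trace ((X ⊗ₖ X)ᴴ * ((c : ℂ) • 1 + (α : ℂ) • (A ⊗ₖ A)) * (X ⊗ₖ X))).re := by
  have hAX := (isHermitian_conjTranspose_mul_mul X hA).im_trace
  have hX := (isHermitian_conjTranspose_mul_mul X isHermitian_one).im_trace
  rw [← one_kronecker_one, Matrix.mul_add, Matrix.add_mul, trace_add, Matrix.mul_smul,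
    Matrix.smul_mul, Matrix.mul_smul, Matrix.smul_mul, trace_smul, trace_smul,
    trace_conjTranspose_kronecker_mul_kronecker_mul_kronecker,
    trace_conjTranspose_kronecker_mul_kronecker_mul_kronecker]
  simp only [Matrix.mul_one] at hX ⊢
  simp only [Complex.add_re, smul_eq_mul, Complex.mul_re, Complex.ofReal_re, Complex.ofReal_im,
    hX, hAX]
  nlinarith [sq_nonneg (Xᴴ * A * X).trace.re]

end Matrix

theorem sigmaZ_isHermitian : sigmaZ.IsHermitian := by
  ext i j
  fin_cases i <;> fin_cases j <;> simp [sigmaZ]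

theorem one_le_re_trace_conj_of_det_eq_one {α : ℝ} (hα : 0 ≤ α) {X : Matrix (Fin 2) (Fin 2) ℂ}
    (hX : X.det = 1) :
    1 ≤ (trace ((X ⊗ₖ X)ᴴ * ((1 / 4 : ℂ) • 1 + (α : ℂ) • (sigmaZ ⊗ₖ sigmaZ)) * (X ⊗ₖ X))).re := by
  have hnorm : 2 ≤ (Xᴴ * X).trace.re := by
    simpa [hX, re_trace_conjTranspose_mul_self] using two_mul_norm_det_le_sum_norm_sq X
  have := mul_sq_re_trace_le_re_trace_kronecker_conj (c := 1 / 4) hα sigmaZ_isHermitian X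
  push_cast at this
  nlinarith

theorem stmt_5 (α : ℝ) (hα : 0 < α)
    (J : Matrix (Fin 2 × Fin 2) (Fin 2 × Fin 2) ℂ)
    (hJ : J = (1 / 4 : ℂ) • (1 : Matrix (Fin 2 × Fin 2) (Fin 2 × Fin 2) ℂ)
        + (α : ℂ) • (sigmaZ ⊗ₖ sigmaZ))
    (r : ℝ) (hr : r = 1 / 4 - α) :
    ¬ ∃ (n : ℕ) (p : Fin n → ℝ) (X : Fin n → Matrix (Fin 2) (Fin 2) ℂ),
        (∀ i, 0 ≤ p i) ∧ (∑ i, p i = 1) ∧ (∀ i, (X i).det = 1) ∧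
        (∑ i, (p i : ℂ) • ((X i ⊗ₖ X i)ᴴ * J * (X i ⊗ₖ X i)))
          = (r : ℂ) • (1 : Matrix (Fin 2 × Fin 2) (Fin 2 × Fin 2) ℂ) := by
  rintro ⟨n, p, X, hp, hsum, hdet, heq⟩
  have htrace : ∑ i, p i * (trace ((X i ⊗ₖ X i)ᴴ * J * (X i ⊗ₖ X i))).re = r * 4 := by
    simpa [trace_sum, trace_smul, Complex.re_sum] using congrArg (fun M => (trace M).re) heq
  have hmean : ∑ i, p i ≤ ∑ i, p i * (trace ((X i ⊗ₖ X i)ᴴ * J * (X i ⊗ₖ X i))).re :=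
    Finset.sum_le_sum fun i _ => le_mul_of_one_le_right (hp i)
      (hJ ▸ one_le_re_trace_conj_of_det_eq_one hα.le (hdet i))
  linarith
end

section
/- Let H₁ = I + a₁ σ_x⊗σ_x + a₂ σ_y⊗σ_y with a₁, a₂ real, a₁ ≠ 0, a₂ ≠ 0, a₁ ≠ ±a₂, and H₁ positive definite. If i, j ∈ {0,1,2,3} and (σ_i ⊗ σ_j)† H₁ (σ_i ⊗ σ_j) = λ H₁ for some scalar λ, then i = j and λ = 1. -/
open Matrix Kronecker ComplexOrder

def pauli : Fin 4 → Matrix (Fin 2) (Fin 2) ℂ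
  | 0 => 1
  | 1 => !![0, 1; 1, 0]
  | 2 => !![0, -Complex.I; Complex.I, 0]
  | 3 => !![1, 0; 0, -1]

set_option maxHeartbeats 2000000 in
theorem stmt_14 (a1 a2 : ℝ) (h1 : a1 ≠ 0) (h2 : a2 ≠ 0)
    (h12 : a1 ≠ a2) (h12' : a1 ≠ -a2)
    (H1 : Matrix (Fin 2 × Fin 2) (Fin 2 × Fin 2) ℂ)
    (hH1 : H1 = 1 + (a1 : ℂ) • (pauli 1 ⊗ₖ pauli 1) + (a2 : ℂ) • (pauli 2 ⊗ₖ pauli 2))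
    (hpos : H1.PosDef)
    (i j : Fin 4) (lam : ℂ)
    (hsym : (pauli i ⊗ₖ pauli j)ᴴ * H1 * (pauli i ⊗ₖ pauli j) = lam • H1) :
    i = j ∧ lam = 1 := by
  subst hH1
  fin_cases i <;> fin_cases j <;>
  · have hd := congrFun (congrFun hsym ((0:Fin 2),(0:Fin 2))) ((0:Fin 2),(0:Fin 2))
    have ha := congrFun (congrFun hsym ((0:Fin 2),(0:Fin 2))) ((1:Fin 2),(1:Fin 2))
    simp [pauli, Matrix.mul_apply, Matrix.conjTranspose_apply, Fintype.sum_prod_type,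
      Fin.sum_univ_succ, Matrix.one_apply, Finset.filter_singleton, Prod.ext_iff,
      Fin.succ_zero_eq_one] at hd ha
    first | norm_num at hd | skip
    first
    | exact ⟨rfl, hd.symm⟩
    | exact ⟨rfl, hd⟩
    | · exfalso
        first | rw [hd] at ha | rw [← hd] at ha
        have har := congrArg Complex.re ha
        simp at har
        first
        | exact h1 (by linarith)
        | exact h2 (by linarith)
        | exact h12 (by linarith)
        | exact h12' (by linarith)
end
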